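/- There exists a length L > 0 such that for every y₀ ∈ ℝ there is a zero s of Q with Re(s) > 0 and Im(s) ∈ (y₀, y₀ + L); that is, the imaginary parts of the zeros of Q form a relatively dense subset of ℝ. -/

import Mathlib

/-- `Q(s) = 1 - 2∑_{k≥1} exp(-s√(k(k+2))/2)`. -/
noncomputable def Qfun (s : ℂ) : ℂ :=
  1 - 2 * ∑' k : ℕ,
    Complex.exp (-(s * (Real.sqrt (((k : ℝ) + 1) * (((k : ℝ) + 1) + 2)) : ℂ) / 2))

open Complex Metric Filter Set Topology

/-!
`Q` is holomorphic on the right half-plane and, by the intermediate value theorem, has a real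
zero `σ > 0`. It is isolated because `Q` is not identically zero, so `‖Q‖ ≥ m > 0` on a small
circle around `σ`. The terms of `Q(s + it)` are those of `Q(s)` multiplied by the characters
`exp(-it√(k(k+2))/2)`. By compactness of the torus, finitely many characters are simultaneously
close to `1` for a relatively dense set of `t`, and the tail of the series is uniformly small.
For such `t`, `Q` is within `m / 2` of `Q(· - it)` on the disc of radius `r` around `σ + it`,
so the minimum modulus principle yields a zero of `Q` in that disc.
-/

theorem exists_abs_sub_le_forall_norm_exp_sub_one_lt {ι : Type*} [Fintype ι] (ω : ι → ℝ)
    {ε : ℝ} (hε : 0 < ε) :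
    ∃ T : ℝ, ∀ a : ℝ, ∃ t : ℝ, |t - a| ≤ T ∧ ∀ k, ‖cexp (↑(t * ω k) * I) - 1‖ < ε := by
  set ψ : ℝ → ι → ℂ := fun t k => cexp (↑(t * ω k) * I)
  have hK : IsCompact (closure (range ψ)) := by
    refine (isCompact_closedBall (0 : ι → ℂ) 1).of_isClosed_subset isClosed_closure
      (closure_minimal (range_subset_iff.2 fun t => ?_) isClosed_closedBall)
    rw [mem_closedBall, dist_zero_right]
    exact (pi_norm_le_iff_of_nonneg zero_le_one).2 fun k => (norm_exp_ofReal_mul_I _).le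
  obtain ⟨F, hF⟩ := hK.elim_finite_subcover (fun u => ball (ψ u) ε) (fun _ => isOpen_ball)
    fun x hx => mem_iUnion.2 ((mem_closure_range_iff.1 hx ε hε).imp fun _ h => mem_ball.2 h)
  refine ⟨∑ u ∈ F, |u|, fun a => ?_⟩
  obtain ⟨u, huF, hu⟩ := mem_iUnion₂.1 (hF (subset_closure (mem_range_self a)))
  refine ⟨a - u, by simpa using Finset.single_le_sum (fun u _ => abs_nonneg u) huF, fun k => ?_⟩
  -- rotating by `ψ u` is an isometry, so `ψ (a - u)` is as close to `1` as `ψ a` is to `ψ u`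
  have hrot : ψ a k - ψ u k = (cexp (↑((a - u) * ω k) * I) - 1) * ψ u k := by
    simp only [ψ, sub_mul, ← Complex.exp_add, one_mul]
    congr 2
    push_cast
    ring
  calc ‖cexp (↑((a - u) * ω k) * I) - 1‖ = ‖ψ a k - ψ u k‖ := by
        rw [hrot, norm_mul, norm_exp_ofReal_mul_I, mul_one]
    _ ≤ dist (ψ a) (ψ u) := by rw [← dist_eq_norm]; exact dist_le_pi_dist _ _ k
    _ < ε := mem_ball.1 hu

theorem norm_exp_ofReal_mul_I_sub_one_le_two (x : ℝ) : ‖cexp (x * I) - 1‖ ≤ 2 :=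
  (norm_sub_le _ _).trans (by rw [norm_exp_ofReal_mul_I, norm_one]; norm_num)

theorem summable_mul_norm_exp_sub_one {ω : ℕ → ℝ} {g : ℕ → ℝ} (hg : Summable g)
    (hg₀ : ∀ k, 0 ≤ g k) (t : ℝ) : Summable fun k => g k * ‖cexp (↑(t * ω k) * I) - 1‖ :=
  (hg.mul_right 2).of_nonneg_of_le (fun k => mul_nonneg (hg₀ k) (norm_nonneg _))
    fun k => mul_le_mul_of_nonneg_left (norm_exp_ofReal_mul_I_sub_one_le_two _) (hg₀ k)

theorem exists_abs_sub_le_tsum_mul_norm_exp_sub_one_lt (ω : ℕ → ℝ) {g : ℕ → ℝ}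
    (hg : Summable g) (hg₀ : ∀ k, 0 ≤ g k) {η : ℝ} (hη : 0 < η) :
    ∃ T : ℝ, ∀ a : ℝ, ∃ t : ℝ, |t - a| ≤ T ∧
      ∑' k, g k * ‖cexp (↑(t * ω k) * I) - 1‖ < η := by
  obtain ⟨N, hN⟩ : ∃ N, ∑' k, g (k + N) < η / 4 :=
    ((tendsto_order.1 (tendsto_sum_nat_add g)).2 _ (by positivity)).exists
  set G := ∑' k, g k
  have hG : 0 ≤ G := tsum_nonneg hg₀
  set ε := η / (2 * (G + 1))
  have hεG : ε * G < η / 2 := by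
    rw [div_mul_eq_mul_div, div_lt_div_iff₀ (by positivity) two_pos]
    nlinarith
  obtain ⟨T, hT⟩ :=
    exists_abs_sub_le_forall_norm_exp_sub_one_lt (fun k : Fin N => ω k) (ε := ε) (by positivity)
  refine ⟨T, fun a => ?_⟩
  obtain ⟨t, hta, ht⟩ := hT a
  refine ⟨t, hta, ?_⟩
  set e : ℕ → ℝ := fun k => ‖cexp (↑(t * ω k) * I) - 1‖
  have hsum : Summable fun k => g k * e k := summable_mul_norm_exp_sub_one hg hg₀ t
  have hhead : ∑ k ∈ Finset.range N, g k * e k ≤ ε * G :=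
    calc ∑ k ∈ Finset.range N, g k * e k ≤ ∑ k ∈ Finset.range N, ε * g k :=
          Finset.sum_le_sum fun k hk => by
            rw [mul_comm ε]
            exact mul_le_mul_of_nonneg_left (ht ⟨k, Finset.mem_range.1 hk⟩).le (hg₀ k)
      _ ≤ ε * G := by
          rw [← Finset.mul_sum]
          exact mul_le_mul_of_nonneg_left (hg.sum_le_tsum _ fun k _ => hg₀ k) (by positivity)
  have htail : ∑' k, g (k + N) * e (k + N) ≤ 2 * ∑' k, g (k + N) := by
    rw [← tsum_mul_left]
    exact ((summable_nat_add_iff N).2 hsum).tsum_le_tsum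
      (fun k => by
        rw [mul_comm 2]
        exact mul_le_mul_of_nonneg_left (norm_exp_ofReal_mul_I_sub_one_le_two _) (hg₀ _))
      ((summable_nat_add_iff N).2 hg |>.mul_left 2)
  rw [← hsum.sum_add_tsum_nat_add N]
  linarith

theorem exists_zero_of_norm_lt_of_forall_sphere {f : ℂ → ℂ} {c : ℂ} {r : ℝ} (hr : 0 < r)
    (hf : DifferentiableOn ℂ f (closedBall c r)) (hlt : ∀ z ∈ sphere c r, ‖f c‖ < ‖f z‖) :
    ∃ z ∈ closedBall c r, f z = 0 := by
  by_contra! hne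
  obtain ⟨m, hm, hmf⟩ := (isCompact_sphere c r).exists_forall_le'
    (hf.continuousOn.mono sphere_subset_closedBall).norm fun z hz => hlt z hz
  -- maximum modulus principle for `1 / f`
  have hinv : DiffContOnCl ℂ (fun z => (f z)⁻¹) (ball c r) := by
    refine ⟨(hf.mono ball_subset_closedBall).inv fun z hz => hne z (ball_subset_closedBall hz), ?_⟩
    rw [closure_ball c hr.ne']
    exact hf.continuousOn.inv₀ hne
  have hc : ‖(f c)⁻¹‖ ≤ m⁻¹ := by
    refine norm_le_of_forall_mem_frontier_norm_le isBounded_ball hinv (fun z hz => ?_)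
      (subset_closure (mem_ball_self hr))
    rw [frontier_ball c hr.ne'] at hz
    rw [norm_inv]
    exact inv_anti₀ ((norm_nonneg _).trans_lt hm) (hmf z hz)
  have hfc : 0 < ‖f c‖ := norm_pos_iff.2 (hne c (mem_closedBall_self hr.le))
  rw [norm_inv, inv_le_inv₀ hfc ((norm_nonneg _).trans_lt hm)] at hc
  exact lt_irrefl _ (hm.trans_le hc)

theorem exists_zero_of_forall_norm_sub_lt {f g : ℂ → ℂ} {c : ℂ} {r m : ℝ} (hr : 0 < r)
    (hf : DifferentiableOn ℂ f (closedBall c r)) (hgc : g c = 0)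
    (hg : ∀ z ∈ sphere c r, m ≤ ‖g z‖) (hfg : ∀ z ∈ closedBall c r, ‖f z - g z‖ < m / 2) :
    ∃ z ∈ closedBall c r, f z = 0 := by
  refine exists_zero_of_norm_lt_of_forall_sphere hr hf fun z hz => ?_
  have hc := hfg c (mem_closedBall_self hr.le)
  have hz' := hfg z (sphere_subset_closedBall hz)
  rw [hgc, sub_zero] at hc
  linarith [hg z hz, norm_sub_norm_le (g z) (f z), norm_sub_rev (f z) (g z)]

theorem re_le_of_mem_closedBall {c z : ℂ} {r : ℝ} (hz : z ∈ closedBall c r) :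
    c.re - r ≤ z.re := by
  have := (abs_le.1 ((abs_re_le_norm (z - c)).trans (mem_closedBall_iff_norm.1 hz))).1
  rw [sub_re] at this
  linarith

namespace Qfun

noncomputable def weight (k : ℕ) : ℝ := √(((k : ℝ) + 1) * (((k : ℝ) + 1) + 2))

noncomputable def term (k : ℕ) (s : ℂ) : ℂ := cexp (-(s * weight k / 2))

theorem eq_one_sub_two_mul_tsum (s : ℂ) : Qfun s = 1 - 2 * ∑' k, term k s := rfl

theorem add_one_le_weight (k : ℕ) : (k : ℝ) + 1 ≤ weight k :=
  (Real.le_sqrt (by positivity) (by positivity)).2 (by nlinarith)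

theorem weight_le_add_two (k : ℕ) : weight k ≤ k + 2 :=
  (Real.sqrt_le_left (by positivity)).2 (by nlinarith)

theorem weight_nonneg (k : ℕ) : 0 ≤ weight k := Real.sqrt_nonneg _

theorem norm_term (k : ℕ) (s : ℂ) : ‖term k s‖ = Real.exp (-(s.re * weight k / 2)) := by
  rw [term, norm_exp]
  congr 1
  simp

theorem exp_neg_mul_weight_le {δ : ℝ} (hδ : 0 ≤ δ) (k : ℕ) :
    Real.exp (-(δ * weight k / 2)) ≤ Real.exp (-(δ / 2)) ^ (k + 1) := by
  rw [← Real.exp_nat_mul, Real.exp_le_exp]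
  push_cast
  nlinarith [add_one_le_weight k]

theorem summable_exp_neg_mul_weight {δ : ℝ} (hδ : 0 < δ) :
    Summable fun k => Real.exp (-(δ * weight k / 2)) := by
  refine Summable.of_nonneg_of_le (fun _ => (Real.exp_pos _).le) (exp_neg_mul_weight_le hδ.le) ?_
  exact (summable_nat_add_iff 1).2 <| summable_geometric_of_lt_one (Real.exp_pos _).le <|
    Real.exp_lt_one_iff.2 (by linarith)

theorem norm_term_le {δ : ℝ} {s : ℂ} (hs : δ ≤ s.re) (k : ℕ) :
    ‖term k s‖ ≤ Real.exp (-(δ * weight k / 2)) := by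
  rw [norm_term, Real.exp_le_exp]
  nlinarith [weight_nonneg k]

theorem summable_term {s : ℂ} (hs : 0 < s.re) : Summable fun k => term k s :=
  Summable.of_norm_bounded (summable_exp_neg_mul_weight hs) (norm_term_le le_rfl)

theorem differentiableOn : DifferentiableOn ℂ Qfun {s | 0 < s.re} := by
  intro s hs
  have hU : IsOpen {z : ℂ | s.re / 2 < z.re} := isOpen_lt continuous_const continuous_re
  have hsum : DifferentiableOn ℂ (fun z => ∑' k, term k z) {z | s.re / 2 < z.re} :=
    differentiableOn_tsum_of_summable_norm (summable_exp_neg_mul_weight (half_pos hs))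
      (fun k => (((differentiable_id.mul_const _).div_const _).neg.cexp).differentiableOn) hU
      fun k z hz => norm_term_le (le_of_lt hz) k
  have hs' : s ∈ {z : ℂ | s.re / 2 < z.re} := by show s.re / 2 < s.re; linarith [hs.out]
  exact ((differentiableAt_const _).sub ((differentiableAt_const _).mul
    (hsum.differentiableAt (hU.mem_nhds hs')))).differentiableWithinAt

theorem ofReal_eq (σ : ℝ) :
    Qfun σ = ((1 - 2 * ∑' k, Real.exp (-(σ * weight k / 2)) : ℝ) : ℂ) := by
  rw [eq_one_sub_two_mul_tsum, ofReal_sub, ofReal_mul, ofReal_tsum]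
  push_cast
  rfl

theorem re_ofReal_half_lt_zero : (Qfun ((1 / 2 : ℝ) : ℂ)).re < 0 := by
  rw [ofReal_eq, ofReal_re]
  have hterm : 1 / 2 < Real.exp (-(1 / 2 * weight 0 / 2)) :=
    calc (1 / 2 : ℝ) = -(1 / 2) + 1 := by norm_num
      _ < Real.exp (-(1 / 2)) := Real.add_one_lt_exp (by norm_num)
      _ ≤ _ := Real.exp_le_exp.2 (by have := weight_le_add_two 0; norm_num at this; linarith)
  linarith [(summable_exp_neg_mul_weight (by norm_num : (0 : ℝ) < 1 / 2)).le_tsum 0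
    fun k _ => (Real.exp_pos _).le]

theorem zero_lt_re_ofReal_four : 0 < (Qfun ((4 : ℝ) : ℂ)).re := by
  rw [ofReal_eq, ofReal_re]
  set ρ := Real.exp (-(4 / 2))
  have hρ : 3 * ρ < 1 := by
    have := Real.add_one_lt_exp (by norm_num : (2 : ℝ) ≠ 0)
    rw [show ρ = (Real.exp 2)⁻¹ by rw [← Real.exp_neg]; norm_num [ρ]]
    rw [← div_eq_mul_inv, div_lt_one (Real.exp_pos _)]
    linarith
  have hρ₀ : 0 < ρ := Real.exp_pos _
  have hgeom : ∑' k : ℕ, ρ ^ (k + 1) = ρ / (1 - ρ) := by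
    simp only [pow_succ, tsum_mul_right, tsum_geometric_of_lt_one hρ₀.le (by linarith)]
    field_simp
  have hle : ∑' k, Real.exp (-(4 * weight k / 2)) ≤ ρ / (1 - ρ) :=
    hgeom ▸ (summable_exp_neg_mul_weight (by norm_num)).tsum_le_tsum
      (exp_neg_mul_weight_le (by norm_num)) ((summable_nat_add_iff 1).2 <|
        summable_geometric_of_lt_one hρ₀.le (by linarith))
  have : ρ / (1 - ρ) < 1 / 2 := by rw [div_lt_iff₀ (by linarith)]; linarith
  linarith

theorem exists_pos_eq_zero : ∃ σ : ℝ, 0 < σ ∧ Qfun σ = 0 := by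
  have hcont : ContinuousOn (fun σ : ℝ => (Qfun σ).re) (Icc (1 / 2) 4) :=
    continuous_re.comp_continuousOn <| differentiableOn.continuousOn.comp
      continuous_ofReal.continuousOn fun σ hσ => show (0 : ℝ) < σ by linarith [hσ.1]
  obtain ⟨σ, hσ, hσ0⟩ := intermediate_value_Icc (by norm_num) hcont
    ⟨re_ofReal_half_lt_zero.le, zero_lt_re_ofReal_four.le⟩
  refine ⟨σ, by linarith [hσ.1], ?_⟩
  simp only [ofReal_eq, ofReal_re] at hσ0 ⊢
  rw [hσ0, ofReal_zero]

theorem exists_sphere_forall_le_norm : ∃ σ r m : ℝ, 0 < r ∧ r < σ ∧ 0 < m ∧ Qfun σ = 0 ∧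
    ∀ z ∈ sphere (σ : ℂ) r, m ≤ ‖Qfun z‖ := by
  obtain ⟨σ, hσ, hQσ⟩ := exists_pos_eq_zero
  have hU : IsOpen {s : ℂ | 0 < s.re} := isOpen_lt continuous_const continuous_re
  have hA : AnalyticOnNhd ℂ Qfun {s | 0 < s.re} := differentiableOn.analyticOnNhd hU
  have hσU : (σ : ℂ) ∈ {s : ℂ | 0 < s.re} := by simpa using hσ
  -- `Qfun` does not vanish identically on the connected half-plane, so its zero `σ` is isolated
  have hne : ∀ᶠ z in 𝓝[≠] (σ : ℂ), Qfun z ≠ 0 :=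
    (hA σ hσU).eventually_eq_zero_or_eventually_ne_zero.resolve_left fun h =>
      zero_lt_re_ofReal_four.ne' <| by
        rw [hA.eqOn_zero_of_preconnected_of_eventuallyEq_zero
          (convex_halfSpace_re_gt 0).isPreconnected hσU h (by simp : ((4 : ℝ) : ℂ) ∈ _)]
        simp
  obtain ⟨ε, hε, hεne⟩ := Metric.eventually_nhds_iff.1 (eventually_nhdsWithin_iff.1 hne)
  set r := min (ε / 2) (σ / 2)
  have hr : 0 < r := lt_min (half_pos hε) (half_pos hσ)
  have hsphere : ∀ z ∈ sphere (σ : ℂ) r, Qfun z ≠ 0 := fun z hz => by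
    rw [mem_sphere] at hz
    refine hεne (hz.trans_lt ((min_le_left _ _).trans_lt (half_lt_self hε))) fun h => ?_
    rw [show z = σ from h, dist_self] at hz
    exact hr.ne hz
  have hcont : ContinuousOn Qfun (sphere (σ : ℂ) r) :=
    differentiableOn.continuousOn.mono fun z hz =>
      show 0 < z.re by
        linarith [re_le_of_mem_closedBall (sphere_subset_closedBall hz), ofReal_re σ,
          min_le_right (ε / 2) (σ / 2)]
  obtain ⟨m, hm, hmQ⟩ := (isCompact_sphere (σ : ℂ) r).exists_forall_le' hcont.norm
    fun z hz => norm_pos_iff.2 (hsphere z hz)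
  exact ⟨σ, r, m, hr, (min_le_right _ _).trans_lt (half_lt_self hσ), hm, hQσ, hmQ⟩

theorem norm_add_mul_I_sub_le {δ : ℝ} (hδ : 0 < δ) {s : ℂ} (hs : δ ≤ s.re) (t : ℝ) :
    ‖Qfun (s + t * I) - Qfun s‖ ≤
      2 * ∑' k, Real.exp (-(δ * weight k / 2)) * ‖cexp (↑(t * -(weight k / 2)) * I) - 1‖ := by
  set e : ℕ → ℂ := fun k => cexp (↑(t * -(weight k / 2)) * I)
  have hterm : ∀ k, term k (s + t * I) = term k s * e k := fun k => by
    simp only [term, e, ← exp_add]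
    congr 1
    push_cast
    ring
  have hs₀ : 0 < s.re := hδ.trans_le hs
  have hsum : Summable fun k => term k s * e k := by
    simpa [hterm] using summable_term (s := s + t * I) (by simpa using hs₀)
  have hdiff : Qfun (s + t * I) - Qfun s = -2 * ∑' k, term k s * (e k - 1) := by
    simp only [eq_one_sub_two_mul_tsum, hterm, mul_sub, mul_one,
      hsum.tsum_sub (summable_term hs₀)]
    ring
  rw [hdiff, norm_mul, norm_neg, RCLike.norm_ofNat]
  gcongr
  refine tsum_of_norm_bounded (summable_mul_norm_exp_sub_one (summable_exp_neg_mul_weight hδ)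
    (fun _ => (Real.exp_pos _).le) t).hasSum fun k => ?_
  rw [norm_mul]
  exact mul_le_mul_of_nonneg_right (norm_term_le hs k) (norm_nonneg _)

end Qfun

open Qfun

/-- there is a length `L > 0` such that every open interval `(y₀, y₀ + L)`
contains the imaginary part of some zero of `Q` in the right half-plane; i.e. the
imaginary parts of the zeros of `Q` form a relatively dense subset of `ℝ`. -/
theorem stmt_16 :
    ∃ L : ℝ, 0 < L ∧ ∀ y₀ : ℝ, ∃ s : ℂ,
      0 < s.re ∧ Qfun s = 0 ∧ y₀ < s.im ∧ s.im < y₀ + L := by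
  obtain ⟨σ, r, m, hr, hrσ, hm, hQσ, hQm⟩ := exists_sphere_forall_le_norm
  have hδ : 0 < σ - r := sub_pos.2 hrσ
  obtain ⟨T, hT⟩ := exists_abs_sub_le_tsum_mul_norm_exp_sub_one_lt (fun k => -(weight k / 2))
    (summable_exp_neg_mul_weight hδ) (fun _ => (Real.exp_pos _).le) (η := m / 4) (by positivity)
  have hT₀ : 0 ≤ T := by obtain ⟨t, ht, -⟩ := hT 0; exact (abs_nonneg _).trans ht
  refine ⟨2 * (T + r) + 1, by positivity, fun y₀ => ?_⟩
  obtain ⟨t, hta, ht⟩ := hT (y₀ + T + r + 1 / 2)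
  set c : ℂ := σ + t * I
  have hclose : ∀ z ∈ closedBall c r, ‖Qfun z - Qfun (z - t * I)‖ < m / 2 := fun z hz => by
    have hre : σ - r ≤ (z - t * I).re := by simpa [c] using re_le_of_mem_closedBall hz
    have := norm_add_mul_I_sub_le hδ hre t
    rw [sub_add_cancel] at this
    linarith
  obtain ⟨z, hz, hQz⟩ := exists_zero_of_forall_norm_sub_lt hr
    (differentiableOn.mono fun w hw => show 0 < w.re by
      linarith [re_le_of_mem_closedBall hw, show c.re = σ by simp [c]])
    (g := fun z => Qfun (z - t * I)) (by simpa [c] using hQσ)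
    (fun w hw => hQm _ (by simpa [c, dist_eq_norm, sub_sub, add_comm] using hw)) hclose
  have him := abs_le.1 ((abs_im_le_norm (z - c)).trans (mem_closedBall_iff_norm.1 hz))
  have hta' := abs_le.1 hta
  simp only [sub_im, c, add_im, ofReal_im, mul_im, ofReal_re, I_im, I_re] at him
  refine ⟨z, ?_, hQz, ?_, ?_⟩
  · linarith [re_le_of_mem_closedBall hz, show c.re = σ by simp [c]]
  · linarith
  · linarith
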